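/- The union over all positive 3-braids w of the root sets of the Alexander polynomials of their closures is dense in the unit circle. -/

import Mathlib

open Polynomial

/-- The positive generators σ₁, σ₂ of the braid group `B₃`. -/
inductive BGen
  | s1 | s2
deriving DecidableEq

/-- The reduced Burau representation over `ℤ[t]`, on the positive generators. -/
noncomputable def burauGen : BGen → Matrix (Fin 2) (Fin 2) (Polynomial ℤ)
  | .s1 => !![-X, 1; 0, 1]
  | .s2 => !![1, 0; X, -X]

/-- The Burau matrix of a positive word. -/
noncomputable def burauPos (w : List BGen) : Matrix (Fin 2) (Fin 2) (Polynomial ℤ) :=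
  (w.map burauGen).prod

/-- The Alexander polynomial of the closure of a positive word,
`Δ = det(B_t(w) - I) / (t² + t + 1)`. -/
noncomputable def alexPoly (w : List BGen) : Polynomial ℤ :=
  (burauPos w - 1).det /ₘ (X ^ 2 + X + 1)

/-- partial sums of geometric series in -X -/
noncomputable def gpoly (n : ℕ) : Polynomial ℤ := ∑ k ∈ Finset.range n, (-X) ^ k

def wword (n : ℕ) : List BGen := .s1 :: .s2 :: .s1 :: List.replicate n .s2

lemma burau_wword (n : ℕ) :
    burauPos (wword n) = !![-X ^ 2 * gpoly n, (-X) ^ (n + 1); -X ^ 2, 0] := by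
  induction n with
  | zero =>
    simp [wword, burauPos, burauGen, gpoly, Matrix.mul_fin_two]
    ring
  | succ n ih =>
    have hrep : wword (n + 1) = wword n ++ [.s2] := by
      simp [wword, List.replicate_succ']
    rw [hrep]
    have : burauPos (wword n ++ [.s2]) = burauPos (wword n) * burauGen .s2 := by
      simp [burauPos, List.prod_append]
    rw [this, ih]
    show _ = _
    simp [burauGen, Matrix.mul_fin_two, gpoly, Finset.sum_range_succ]
    constructor <;> ring

lemma gpoly_ident (n : ℕ) :
    (1 : Polynomial ℤ) + X ^ 2 * gpoly n + X ^ 2 * (-X) ^ (n + 1)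
      = (X ^ 2 + X + 1) * gpoly (n + 2) := by
  induction n with
  | zero => simp [gpoly, Finset.sum_range_succ]; ring
  | succ n ih =>
    have h1 : gpoly (n + 1) = gpoly n + (-X) ^ n := by
      simp [gpoly, Finset.sum_range_succ]
    have h3 : gpoly (n + 3) = gpoly (n + 2) + (-X) ^ (n + 2) := by
      simp [gpoly, Finset.sum_range_succ]
    rw [h1]
    have : gpoly (n + 1 + 2) = gpoly (n + 2) + (-X) ^ (n + 2) := h3
    rw [this]
    linear_combination ih

lemma det_wword (n : ℕ) :
    (burauPos (wword n) - 1).det = (X ^ 2 + X + 1) * gpoly (n + 2) := by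
  rw [burau_wword, ← gpoly_ident]
  rw [Matrix.det_fin_two]
  simp [Matrix.one_fin_two]
  ring

lemma monic_q : (X ^ 2 + X + 1 : Polynomial ℤ).Monic := by
  monicity!

lemma alex_wword (n : ℕ) : alexPoly (wword n) = gpoly (n + 2) := by
  rw [alexPoly, det_wword, Polynomial.mul_divByMonic_cancel_left _ monic_q]

lemma aeval_gpoly (x : ℂ) (m : ℕ) :
    (Polynomial.aeval x) (gpoly m) = ∑ k ∈ Finset.range m, (-x) ^ k := by
  simp [gpoly]

lemma root_of_unity_root (m : ℕ) (hm : 2 ≤ m) (u : ℂ) (hu : u ^ m = 1) (hu1 : u ≠ 1) :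
    (-u) ∈ ⋃ w : List BGen, {x : ℂ | (Polynomial.aeval x) (alexPoly w) = 0} := by
  refine Set.mem_iUnion.mpr ⟨wword (m - 2), ?_⟩
  have hm2 : m - 2 + 2 = m := Nat.sub_add_cancel hm
  show (Polynomial.aeval (-u)) (alexPoly (wword (m - 2))) = 0
  rw [alex_wword, hm2, aeval_gpoly]
  simp only [neg_neg]
  rw [geom_sum_eq hu1, hu]
  simp

/-- The union over all positive 3-braids `w` of the set of roots of
the Alexander polynomial of the closure of `w` is dense in the unit circle. -/
theorem alexander_roots_dense_in_circle (z : ℂ) (hz : ‖z‖ = 1) :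
    z ∈ closure (⋃ w : List BGen, {x : ℂ | (Polynomial.aeval x) (alexPoly w) = 0}) := by
  rw [Metric.mem_closure_iff]
  intro ε hε
  have hπ := Real.pi_pos
  obtain ⟨ζ, hζdef⟩ : ∃ w : ℂ, w = -z := ⟨_, rfl⟩
  have hζabs : ‖ζ‖ = 1 := by simpa [hζdef] using hz
  obtain ⟨θ, hθdef⟩ : ∃ t : ℝ, t = ζ.arg := ⟨_, rfl⟩
  have hexp : Complex.exp (θ * Complex.I) = ζ := by
    have h := Complex.norm_mul_exp_arg_mul_I ζ
    rw [hζabs, Complex.ofReal_one, one_mul] at h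
    rw [hθdef]
    exact h
  have hcont : ContinuousAt (fun t : ℝ => Complex.exp (t * Complex.I)) θ := by
    fun_prop
  obtain ⟨δ, hδ, hδ2⟩ := Metric.continuousAt_iff.mp hcont ε hε
  obtain ⟨m₀, hm₀⟩ := exists_nat_gt (3 * Real.pi / δ)
  obtain ⟨m, hmdef⟩ : ∃ m : ℕ, m = max m₀ 2 := ⟨_, rfl⟩
  have hm2 : 2 ≤ m := hmdef ▸ le_max_right _ _
  have hmpos : (0:ℝ) < m := by
    have : (0:ℕ) < m := lt_of_lt_of_le (by norm_num) hm2
    exact_mod_cast this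
  have hmgt : 3 * Real.pi / δ < m := lt_of_lt_of_le hm₀ (by rw [hmdef]; exact_mod_cast le_max_left m₀ 2)
  have h3 : 3 * Real.pi / m < δ := by
    rw [div_lt_iff₀ hmpos]
    have := (div_lt_iff₀ hδ).mp hmgt
    linarith
  obtain ⟨k, hkdef⟩ : ∃ k : ℤ, k = round (θ * m / (2 * Real.pi)) := ⟨_, rfl⟩
  obtain ⟨k', hk'def⟩ : ∃ j : ℤ, j = if (m:ℤ) ∣ k then k + 1 else k := ⟨_, rfl⟩
  have hndvd : ¬ (m:ℤ) ∣ k' := by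
    by_cases h : (m:ℤ) ∣ k
    · rw [hk'def, if_pos h]
      intro hd
      have h1 : (m:ℤ) ∣ 1 := by
        have := dvd_sub hd h
        simpa using this
      have := Int.le_of_dvd one_pos h1
      omega
    · rwa [hk'def, if_neg h]
  obtain ⟨φ, hφdef⟩ : ∃ p : ℝ, p = 2 * Real.pi * k' / m := ⟨_, rfl⟩
  have hk : |θ * m / (2 * Real.pi) - k| ≤ 1/2 := hkdef ▸ abs_sub_round _
  have hkk' : |(k':ℝ) - k| ≤ 1 := by
    by_cases h : (m:ℤ) ∣ k
    · rw [hk'def, if_pos h]; push_cast; simp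
    · rw [hk'def, if_neg h]; simp
  have hφθ : |φ - θ| < δ := by
    have heq : φ - θ = (2 * Real.pi / m) * (((k':ℝ) - k) - (θ * m / (2 * Real.pi) - k)) := by
      have hm0 : (m:ℝ) ≠ 0 := ne_of_gt hmpos
      have h2π : (2 * Real.pi) ≠ 0 := by positivity
      rw [hφdef]
      field_simp
      ring
    have hb : |φ - θ| ≤ (2 * Real.pi / m) * (3/2) := by
      rw [heq, abs_mul]
      have h1 : |2 * Real.pi / m| = 2 * Real.pi / m := abs_of_pos (by positivity)
      rw [h1]
      have h2 : |((k':ℝ) - k) - (θ * m / (2 * Real.pi) - k)| ≤ 3/2 := by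
        calc |((k':ℝ) - k) - (θ * m / (2 * Real.pi) - k)|
            ≤ |(k':ℝ) - k| + |θ * m / (2 * Real.pi) - k| := abs_sub _ _
          _ ≤ 1 + 1/2 := add_le_add hkk' hk
          _ = 3/2 := by norm_num
      exact mul_le_mul_of_nonneg_left h2 (by positivity)
    calc |φ - θ| ≤ (2 * Real.pi / m) * (3/2) := hb
      _ = 3 * Real.pi / m := by ring
      _ < δ := h3
  obtain ⟨u, hudef⟩ : ∃ v : ℂ, v = Complex.exp (φ * Complex.I) := ⟨_, rfl⟩
  have hum : u ^ m = 1 := by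
    rw [hudef, ← Complex.exp_nat_mul]
    have heq : (m:ℂ) * ((φ:ℝ) * Complex.I) = (k':ℂ) * (2 * Real.pi * Complex.I) := by
      rw [hφdef]
      push_cast
      have : (m:ℂ) ≠ 0 := by exact_mod_cast ne_of_gt hmpos
      field_simp
    rw [heq]
    exact_mod_cast Complex.exp_int_mul_two_pi_mul_I k'
  have hu1 : u ≠ 1 := by
    intro h
    obtain ⟨n, hn⟩ := Complex.exp_eq_one_iff.mp (hudef ▸ h)
    have h2 : ((φ : ℝ) : ℂ) * Complex.I = (((n : ℝ) * (2 * Real.pi) : ℝ) : ℂ) * Complex.I := by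
      rw [hn]; push_cast; ring
    have h3 : (φ : ℝ) = (n : ℝ) * (2 * Real.pi) := by
      exact_mod_cast mul_right_cancel₀ Complex.I_ne_zero h2
    have h4 : (k' : ℝ) = (n : ℝ) * m := by
      rw [hφdef] at h3
      have hm0 : (m:ℝ) ≠ 0 := ne_of_gt hmpos
      have h2π : (2 * Real.pi) ≠ 0 := by positivity
      field_simp at h3
      have h2π : (0:ℝ) < 2 * Real.pi := by positivity
      nlinarith [h3]
    have : k' = n * m := by exact_mod_cast h4
    exact hndvd ⟨n, by rw [this]; ring⟩
  refine ⟨-u, root_of_unity_root m hm2 u hum hu1, ?_⟩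
  have hdz : dist z (-u) = dist ζ u := by
    rw [hζdef]
    rw [← dist_neg_neg z (-u)]
    simp
  rw [hdz, ← hexp, hudef, dist_comm]
  exact hδ2 (by rw [Real.dist_eq]; exact hφθ)
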